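/- arXiv:2003.00454 — 8 statements merged into one kernel-verified Lean document; each statement's English description precedes it below -/
import Mathlib

section
/- The determinant of the n×n upper Hessenberg matrix U_n(s,t), whose subdiagonal entries equal s, whose entry (i,j) equals t when j ≥ i and j−i is even, and equals 0 when j > i and j−i is odd, satisfies the recurrence det(U_n) = t·det(U_{n−1}) + s²·det(U_{n−2}) for all n ≥ 3, with det(U_1) = t and det(U_2) = t². -/
/-- The upper Hessenberg matrix `U_n(s,t)`: subdiagonal entries `s`,
entry `t` at `(i,j)` with `j ≥ i` and `j - i` even, `0` at `(i,j)` with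
`j > i` and `j - i` odd, and `0` below the subdiagonal. -/
def hessU (s t : ℝ) (n : ℕ) : Matrix (Fin n) (Fin n) ℝ :=
  fun i j =>
    if (i : ℕ) ≤ (j : ℕ) then (if ((j : ℕ) - (i : ℕ)) % 2 = 0 then t else 0)
    else if (i : ℕ) = (j : ℕ) + 1 then s else 0

/-!
Expand `det U_n` along its first column, whose only nonzero entries are `t` and `s` in the
first two rows. The entries of `U` depend only on `j - i`, so deleting the first row and column
leaves `U_{n-1}`. The minor obtained by deleting the second row instead has first column
`(0, s, 0, …)`; expanding it once more leaves `U_{n-2}`, because the first row of `U` has period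
two. The two signs combine into the term `s² det U_{n-2}`.
-/

open Matrix

def hessEntry {R : Type*} [Zero R] (s t : R) (a b : ℕ) : R :=
  if a ≤ b then (if (b - a) % 2 = 0 then t else 0)
  else if a = b + 1 then s else 0

section hessEntry

variable {R : Type*} [Zero R] (s t : R)

lemma hessEntry_succ_succ (a b : ℕ) : hessEntry s t (a + 1) (b + 1) = hessEntry s t a b := by
  simp only [hessEntry, Nat.add_le_add_iff_right, Nat.add_sub_add_right, Nat.add_right_cancel_iff]

lemma hessEntry_zero_add_two (b : ℕ) : hessEntry s t 0 (b + 2) = hessEntry s t 0 b := by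
  simp only [hessEntry, Nat.zero_le, if_true, Nat.sub_zero, Nat.add_mod_right]

lemma hessEntry_add_two_zero (a : ℕ) : hessEntry s t (a + 2) 0 = 0 := by
  simp [hessEntry]

end hessEntry

lemma hessU_apply (s t : ℝ) {n : ℕ} (i j : Fin n) : hessU s t n i j = hessEntry s t i j := rfl

lemma Matrix.det_of_column_zero_tail_eq_zero {R : Type*} [CommRing R] {n : ℕ}
    (A : Matrix (Fin (n + 2)) (Fin (n + 2)) R) (hA : ∀ i : Fin n, A i.succ.succ 0 = 0) :
    A.det = A 0 0 * (A.submatrix Fin.succ Fin.succ).det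
      - A 1 0 * (A.submatrix (Fin.succAbove 1) Fin.succ).det := by
  rw [det_succ_column_zero, Fin.sum_univ_succ, Fin.sum_univ_succ]
  simp [hA, sub_eq_add_neg]

lemma hessU_submatrix_succ_succ (s t : ℝ) (n : ℕ) :
    (hessU s t (n + 1)).submatrix Fin.succ Fin.succ = hessU s t n := by
  ext i j
  simp only [submatrix_apply, hessU_apply, Fin.val_succ, hessEntry_succ_succ]

section secondRowMinor

variable (s t : ℝ) (n : ℕ)

def hessUSecondRowMinor : Matrix (Fin (n + 2)) (Fin (n + 2)) ℝ :=
  (hessU s t (n + 3)).submatrix (Fin.succAbove 1) Fin.succ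

lemma hessUSecondRowMinor_zero (j : Fin (n + 2)) :
    hessUSecondRowMinor s t n 0 j = hessEntry s t 0 ((j : ℕ) + 1) := rfl

lemma hessUSecondRowMinor_succ (i : Fin (n + 1)) (j : Fin (n + 2)) :
    hessUSecondRowMinor s t n i.succ j = hessEntry s t (i + 1) j := by
  simp only [hessUSecondRowMinor, submatrix_apply, Fin.one_succAbove_succ, hessU_apply, Fin.val_succ,
    hessEntry_succ_succ]

lemma hessUSecondRowMinor_submatrix :
    (hessUSecondRowMinor s t n).submatrix (Fin.succAbove 1) Fin.succ = hessU s t (n + 1) := by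
  ext i j
  cases i using Fin.cases with
  | zero => simp only [submatrix_apply, Fin.one_succAbove_zero, hessUSecondRowMinor_zero,
      hessU_apply, Fin.val_succ, Fin.val_zero, hessEntry_zero_add_two]
  | succ i => simp only [submatrix_apply, Fin.one_succAbove_succ, hessUSecondRowMinor_succ,
      hessU_apply, Fin.val_succ, hessEntry_succ_succ]

lemma det_hessUSecondRowMinor :
    (hessUSecondRowMinor s t n).det = -(s * (hessU s t (n + 1)).det) := by
  rw [det_of_column_zero_tail_eq_zero _ fun i => ?_, hessUSecondRowMinor_submatrix]
  · rw [hessUSecondRowMinor_zero, ← Fin.succ_zero_eq_one, hessUSecondRowMinor_succ]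
    simp [hessEntry]
  · simp only [hessUSecondRowMinor_succ, Fin.val_succ, Fin.val_zero, hessEntry_add_two_zero]

end secondRowMinor

lemma det_hessU_add_three (s t : ℝ) (n : ℕ) :
    (hessU s t (n + 3)).det = t * (hessU s t (n + 2)).det + s ^ 2 * (hessU s t (n + 1)).det := by
  rw [det_of_column_zero_tail_eq_zero _ fun i => ?_, hessU_submatrix_succ_succ,
    ← hessUSecondRowMinor, det_hessUSecondRowMinor]
  · simp [hessU_apply, hessEntry]
    ring
  · simp only [hessU_apply, Fin.val_succ, Fin.val_zero, hessEntry_add_two_zero]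

theorem det_hessU_recurrence (s t : ℝ) :
    (hessU s t 1).det = t ∧ (hessU s t 2).det = t ^ 2 ∧
    ∀ n : ℕ, 3 ≤ n →
      (hessU s t n).det =
        t * (hessU s t (n - 1)).det + s ^ 2 * (hessU s t (n - 2)).det := by
  refine ⟨by simp [hessU], by simp [det_fin_two, hessU, sq], fun n hn => ?_⟩
  obtain ⟨m, rfl⟩ : ∃ m, n = m + 3 := ⟨n - 3, by omega⟩
  exact det_hessU_add_three s t m
end

section
/- For t ≥ s > 0, the maximum of |det(A)| over all n×n upper Hessenberg matrices A with subdiagonal entries fixed at s and upper-triangular entries (entries on or above the diagonal) in the interval [0,t] equals M_n, where M_1 = t, M_2 = t², and M_n = t·M_{n−1} + s²·M_{n−2} for n ≥ 3. -/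
/-!
Expanding along the first row, the trailing principal minors `d q` of such a matrix satisfy
`d (q + 1) = ∑_{j ≤ q} (-s)^j c_j d (q - j)` with `c_j ∈ [0, t]`. Hence `d (q + 1) ≤ α q` and
`-d (q + 1) ≤ β q`, where `α q = t (d q)⁺ + s β (q - 1)` and `β q = t (d q)⁻ + s α (q - 1)`
(`α = hessBound d`, `β = hessBound (-d)`).
As `(d q)⁺` and `(d q)⁻` are never both nonzero, induction shows `α q, β q ≤ M (q + 1)` together
with `t α q + s β q, t β q + s α q ≤ M (q + 2)`; the step uses `t ≥ s` through
`M (q + 2) ≥ s M (q + 1)`. Equality holds for the matrix with `t` on the superdiagonals of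
even offset and `0` on those of odd offset, whose trailing minors follow `M`'s recursion.
-/

/-- `A` is an `n×n` upper Hessenberg matrix with subdiagonal entries `s`
and upper-triangular entries in `[0,t]`. -/
def IsUpperHessenbergIcc (s t : ℝ) {n : ℕ} (A : Matrix (Fin n) (Fin n) ℝ) : Prop :=
  (∀ i j : Fin n, (i : ℕ) = (j : ℕ) + 1 → A i j = s) ∧
  (∀ i j : Fin n, (j : ℕ) + 1 < (i : ℕ) → A i j = 0) ∧
  (∀ i j : Fin n, (i : ℕ) ≤ (j : ℕ) → A i j ∈ Set.Icc (0 : ℝ) t)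

/-- `M 1 = t`, `M 2 = t²`, `M n = t·M (n-1) + s²·M (n-2)`. -/
def seqM (s t : ℝ) : ℕ → ℝ
  | 0 => 1
  | 1 => t
  | 2 => t ^ 2
  | (n + 3) => t * seqM s t (n + 2) + s ^ 2 * seqM s t (n + 1)

section HessSum

open Finset

variable {R : Type*} [CommRing R]

def hessSum (s : R) (c d : ℕ → R) (q : ℕ) : R :=
  ∑ j ∈ range (q + 1), (-s) ^ j * c j * d (q - j)

lemma hessSum_zero (s : R) (c d : ℕ → R) : hessSum s c d 0 = c 0 * d 0 := by
  simp [hessSum]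

lemma hessSum_succ (s : R) (c d : ℕ → R) (q : ℕ) :
    hessSum s c d (q + 1) = c 0 * d (q + 1) - s * hessSum s (fun j ↦ c (j + 1)) d q := by
  rw [hessSum, sum_range_succ', hessSum, mul_sum, sub_eq_neg_add, ← sum_neg_distrib]
  simp only [pow_zero, one_mul, Nat.sub_zero, Nat.add_sub_add_right, pow_succ]
  congr 1
  exact sum_congr rfl fun j _ ↦ by ring

lemma hessSum_neg (s : R) (c d : ℕ → R) (q : ℕ) : hessSum s c (-d) q = -hessSum s c d q := by
  simp [hessSum, sum_neg_distrib]

lemma hessSum_congr {s : R} {c c' d d' : ℕ → R} {q : ℕ} (hc : ∀ j ≤ q, c j = c' j)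
    (hd : ∀ j ≤ q, d j = d' j) : hessSum s c d q = hessSum s c' d' q :=
  sum_congr rfl fun j hj ↦ by
    rw [mem_range] at hj
    rw [hc j (by omega), hd (q - j) (by omega)]

end HessSum

section Bounds

variable {s t : ℝ}

def hessBound (s t : ℝ) (d : ℕ → ℝ) : ℕ → ℝ
  | 0 => t * (d 0)⁺
  | q + 1 => t * (d (q + 1))⁺ + s * hessBound s t (-d) q

lemma hessBound_nonneg (hs : 0 ≤ s) (ht : 0 ≤ t) (d : ℕ → ℝ) (q : ℕ) :
    0 ≤ hessBound s t d q := by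
  induction q generalizing d with
  | zero => exact mul_nonneg ht (posPart_nonneg _)
  | succ q ih => exact add_nonneg (mul_nonneg ht (posPart_nonneg _)) (mul_nonneg hs (ih _))

lemma mul_le_mul_posPart_of_mem_Icc {a x : ℝ} (ha : a ∈ Set.Icc 0 t) : a * x ≤ t * x⁺ :=
  (mul_le_mul_of_nonneg_left (le_posPart x) ha.1).trans
    (mul_le_mul_of_nonneg_right ha.2 (posPart_nonneg x))

lemma hessSum_le_hessBound (hs : 0 ≤ s) {c : ℕ → ℝ} (hc : ∀ j, c j ∈ Set.Icc 0 t)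
    (d : ℕ → ℝ) (q : ℕ) : hessSum s c d q ≤ hessBound s t d q := by
  induction q generalizing c d with
  | zero => exact (hessSum_zero s c d).trans_le (mul_le_mul_posPart_of_mem_Icc (hc 0))
  | succ q ih =>
    rw [hessSum_succ, sub_eq_add_neg, ← mul_neg, ← hessSum_neg, hessBound]
    exact add_le_add (mul_le_mul_posPart_of_mem_Icc (hc 0))
      (mul_le_mul_of_nonneg_left (ih (fun j ↦ hc (j + 1)) _) hs)

lemma hessSum_mem_Icc_hessBound (hs : 0 ≤ s) {c : ℕ → ℝ} (hc : ∀ j, c j ∈ Set.Icc 0 t)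
    (d : ℕ → ℝ) (q : ℕ) :
    hessSum s c d q ∈ Set.Icc (-hessBound s t (-d) q) (hessBound s t d q) := by
  refine ⟨?_, hessSum_le_hessBound hs hc d q⟩
  rw [neg_le, ← hessSum_neg]
  exact hessSum_le_hessBound hs hc (-d) q

lemma seqM_nonneg (hs : 0 ≤ s) (ht : 0 ≤ t) : ∀ q, 0 ≤ seqM s t q
  | 0 => zero_le_one
  | 1 => ht
  | 2 => sq_nonneg t
  | q + 3 => by
    have := seqM_nonneg hs ht (q + 1)
    have := seqM_nonneg hs ht (q + 2)
    rw [seqM]; positivity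

lemma mul_seqM_le_seqM_succ (hs : 0 ≤ s) (ht : 0 ≤ t) :
    ∀ q, t * seqM s t q ≤ seqM s t (q + 1)
  | 0 => by simp [seqM]
  | 1 => by simp [seqM, sq]
  | q + 2 => by
    have := seqM_nonneg hs ht (q + 1)
    rw [seqM]; nlinarith

def SeqMBound (s t : ℝ) (q : ℕ) (α β : ℝ) : Prop :=
  α ≤ seqM s t (q + 1) ∧ β ≤ seqM s t (q + 1) ∧
    t * α + s * β ≤ seqM s t (q + 2) ∧ t * β + s * α ≤ seqM s t (q + 2)

lemma seqMBound_step (hs : 0 ≤ s) (hst : s ≤ t) {q : ℕ} {α β x y : ℝ}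
    (h : SeqMBound s t q α β) (hx : 0 ≤ x) (hy : 0 ≤ y) (hxy : x = 0 ∨ y = 0)
    (hxα : x ≤ α) (hyβ : y ≤ β) : SeqMBound s t (q + 1) (t * x + s * β) (t * y + s * α) := by
  obtain ⟨hα, hβ, hαβ, hβα⟩ := h
  have ht : 0 ≤ t := hs.trans hst
  have hM : t * seqM s t (q + 1) ≤ seqM s t (q + 2) := mul_seqM_le_seqM_succ hs ht (q + 1)
  have hM₁ := seqM_nonneg hs ht (q + 1)
  have hM₃ : seqM s t (q + 3) = t * seqM s t (q + 2) + s ^ 2 * seqM s t (q + 1) := rfl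
  refine ⟨by nlinarith, by nlinarith, ?_, ?_⟩ <;> rw [hM₃] <;> rcases hxy with rfl | rfl
  · nlinarith [mul_le_mul_of_nonneg_left hyβ (mul_nonneg ht hs),
      mul_le_mul_of_nonneg_left hβα hs, mul_le_mul_of_nonneg_left hβ (mul_nonneg ht hs),
      mul_nonneg (sub_nonneg.2 hst) (sub_nonneg.2 ((mul_le_mul_of_nonneg_right hst hM₁).trans hM))]
  · nlinarith [mul_le_mul_of_nonneg_left hxα (mul_nonneg ht ht)]
  · nlinarith [mul_le_mul_of_nonneg_left hyβ (mul_nonneg ht ht)]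
  · nlinarith [mul_le_mul_of_nonneg_left hxα (mul_nonneg ht hs),
      mul_le_mul_of_nonneg_left hαβ hs, mul_le_mul_of_nonneg_left hα (mul_nonneg ht hs),
      mul_nonneg (sub_nonneg.2 hst) (sub_nonneg.2 ((mul_le_mul_of_nonneg_right hst hM₁).trans hM))]

section Recursion

variable {d : ℕ → ℝ} {N : ℕ}

def HessRecursion (s t : ℝ) (d : ℕ → ℝ) (N : ℕ) : Prop :=
  d 0 = 1 ∧ ∀ q < N, ∃ c : ℕ → ℝ, (∀ j, c j ∈ Set.Icc 0 t) ∧ d (q + 1) = hessSum s c d q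

lemma seqMBound_hessBound (hs : 0 ≤ s) (hst : s ≤ t) (hd : HessRecursion s t d N) :
    ∀ q ≤ N, SeqMBound s t q (hessBound s t d q) (hessBound s t (-d) q)
  | 0, _ => by
    have hα : hessBound s t d 0 = t := by simp [hessBound, hd.1]
    have hβ : hessBound s t (-d) 0 = 0 := by simp [hessBound, hd.1]
    rw [hα, hβ]
    show t ≤ t ∧ 0 ≤ t ∧ t * t + s * 0 ≤ t ^ 2 ∧ t * 0 + s * t ≤ t ^ 2
    exact ⟨le_rfl, hs.trans hst, by nlinarith, by nlinarith⟩
  | q + 1, hq => by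
    obtain ⟨c, hc, hdq⟩ := hd.2 q (by omega)
    have hbd := hdq ▸ hessSum_mem_Icc_hessBound hs hc d q
    have ht : 0 ≤ t := hs.trans hst
    simp only [hessBound, Pi.neg_apply, posPart_neg, neg_neg]
    refine seqMBound_step hs hst (seqMBound_hessBound hs hst hd q (by omega))
      (posPart_nonneg _) (negPart_nonneg _) ?_
      (max_le hbd.2 (hessBound_nonneg hs ht _ _))
      (max_le (neg_le.1 hbd.1) (hessBound_nonneg hs ht _ _))
    rcases le_total (d (q + 1)) 0 with h | h
    · exact Or.inl (posPart_eq_zero.2 h)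
    · exact Or.inr (negPart_eq_zero.2 h)

theorem abs_le_seqM_of_hessRecursion (hs : 0 ≤ s) (hst : s ≤ t) (hd : HessRecursion s t d N) :
    ∀ n ≤ N, |d n| ≤ seqM s t n
  | 0, _ => by simp [hd.1, seqM]
  | q + 1, hq => by
    obtain ⟨c, hc, hdq⟩ := hd.2 q (by omega)
    have hbd := hdq ▸ hessSum_mem_Icc_hessBound hs hc d q
    obtain ⟨hα, hβ, -⟩ := seqMBound_hessBound hs hst hd q (by omega)
    exact abs_le.2 ⟨by linarith [hbd.1], hbd.2.trans hα⟩

end Recursion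

end Bounds

section TrailingMinor

open Matrix Fin.NatCast

variable {R : Type*} [CommRing R]

/-- `trailingMinor B q` is the determinant of the bottom-right `q × q` block of `B`
(junk value `1` for `q > n`). -/
def trailingMinor : {n : ℕ} → Matrix (Fin n) (Fin n) R → ℕ → R
  | 0, _, _ => 1
  | n + 1, B, q => if q = n + 1 then B.det else trailingMinor (B.submatrix Fin.succ Fin.succ) q

lemma trailingMinor_zero : ∀ {n : ℕ} (B : Matrix (Fin n) (Fin n) R), trailingMinor B 0 = 1
  | 0, _ => rfl
  | n + 1, B => by rw [trailingMinor, if_neg n.succ_ne_zero.symm, trailingMinor_zero]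

lemma trailingMinor_self : ∀ {n : ℕ} (B : Matrix (Fin n) (Fin n) R), trailingMinor B n = B.det
  | 0, _ => det_isEmpty.symm
  | _ + 1, _ => if_pos rfl

lemma trailingMinor_of_ne {n : ℕ} (B : Matrix (Fin (n + 1)) (Fin (n + 1)) R) {q : ℕ}
    (hq : q ≠ n + 1) : trailingMinor B q = trailingMinor (B.submatrix Fin.succ Fin.succ) q :=
  if_neg hq

lemma Fin.natCast_succ_eq_succ_natCast {m j : ℕ} (hj : j ≤ m) :
    ((j + 1 : ℕ) : Fin (m + 2)) = (j : Fin (m + 1)).succ := by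
  ext
  rw [Fin.val_succ, Fin.val_cast_of_lt (by omega), Fin.val_cast_of_lt (by omega)]

/-- Expanding along the first column, the minor at `(1, 0)` is again of this shape, with first
row `B 0 (j + 1)`. The index `j : ℕ` is cast into `Fin (m + 1)` modulo `m + 1`; only `j ≤ m`
enters the sum. -/
theorem det_eq_hessSum_trailingMinor (s : R) : ∀ {m : ℕ} (B : Matrix (Fin (m + 1)) (Fin (m + 1)) R),
    (∀ i j : Fin (m + 1), (i : ℕ) = j + 1 → B i j = s) →
    (∀ i j : Fin (m + 1), (j : ℕ) + 1 < i → B i j = 0) →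
    B.det = hessSum s (fun j ↦ B 0 j) (trailingMinor B) m
  | 0, B, _, _ => by simp [hessSum, trailingMinor_zero]
  | m + 1, B, hsub, hzero => by
    set C := B.submatrix (1 : Fin (m + 2)).succAbove Fin.succ
    have hCsub : ∀ i j : Fin (m + 1), (i : ℕ) = j + 1 → C i j = s := by
      intro i j h
      cases i using Fin.cases with
      | zero => simp at h
      | succ i => exact hsub _ _ (by simp at h ⊢; omega)
    have hCzero : ∀ i j : Fin (m + 1), (j : ℕ) + 1 < i → C i j = 0 := by
      intro i j h
      cases i using Fin.cases with
      | zero => simp at h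
      | succ i => exact hzero _ _ (by simp at h ⊢; omega)
    have hcol : B.det = B 0 0 * (B.submatrix Fin.succ Fin.succ).det - s * C.det := by
      rw [det_succ_column_zero, Fin.sum_univ_succ, Fin.sum_univ_succ,
        Finset.sum_eq_zero fun i _ ↦ by rw [hzero i.succ.succ 0 (by simp)]; ring]
      simp [C, hsub 1 0 (by simp), Fin.succ_zero_eq_one, sub_eq_add_neg]
    have hCB : C.submatrix Fin.succ Fin.succ =
        (B.submatrix Fin.succ Fin.succ).submatrix Fin.succ Fin.succ := by
      ext i j; simp [C]
    rw [hcol, det_eq_hessSum_trailingMinor s C hCsub hCzero, hessSum_succ,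
      trailingMinor_of_ne B (q := m + 1) (by omega), trailingMinor_self]
    congr 2
    refine hessSum_congr (fun j hj ↦ ?_) (fun j hj ↦ ?_)
    · simp [C, Fin.natCast_succ_eq_succ_natCast hj]
    · rw [trailingMinor_of_ne C (by omega), hCB, trailingMinor_of_ne B (by omega),
        trailingMinor_of_ne _ (by omega)]

end TrailingMinor

section UpperHessenbergIcc

open Matrix Fin.NatCast

variable {s t : ℝ}

lemma IsUpperHessenbergIcc.submatrix_succ {n : ℕ} {A : Matrix (Fin (n + 1)) (Fin (n + 1)) ℝ}
    (hA : IsUpperHessenbergIcc s t A) :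
    IsUpperHessenbergIcc s t (A.submatrix Fin.succ Fin.succ) :=
  ⟨fun i j h ↦ hA.1 _ _ (by simp [h]), fun i j h ↦ hA.2.1 _ _ (by simp [h]),
    fun i j h ↦ hA.2.2 _ _ (by simp [h])⟩

lemma hessRecursion_trailingMinor : ∀ {n : ℕ} {A : Matrix (Fin n) (Fin n) ℝ},
    IsUpperHessenbergIcc s t A → HessRecursion s t (trailingMinor A) n
  | 0, _, _ => ⟨rfl, by simp⟩
  | n + 1, A, hA => by
    refine ⟨trailingMinor_zero A, fun q hq ↦ ?_⟩
    rcases Nat.lt_succ_iff_lt_or_eq.1 hq with hq | rfl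
    · obtain ⟨c, hc, h⟩ := (hessRecursion_trailingMinor hA.submatrix_succ).2 q hq
      refine ⟨c, hc, ?_⟩
      rw [trailingMinor_of_ne A (by omega), h]
      exact hessSum_congr (fun _ _ ↦ rfl) fun j hj ↦ (trailingMinor_of_ne A (by omega)).symm
    · refine ⟨fun j ↦ A 0 j, fun j ↦ hA.2.2 _ _ (by simp), ?_⟩
      rw [trailingMinor_self]
      exact det_eq_hessSum_trailingMinor s A hA.1 hA.2.1

theorem abs_det_le_seqM (hs : 0 ≤ s) (hst : s ≤ t) {n : ℕ} {A : Matrix (Fin n) (Fin n) ℝ}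
    (hA : IsUpperHessenbergIcc s t A) : |A.det| ≤ seqM s t n :=
  trailingMinor_self A ▸
    abs_le_seqM_of_hessRecursion hs hst (hessRecursion_trailingMinor hA) n le_rfl

def checkerboard (s t : ℝ) (n : ℕ) : Matrix (Fin n) (Fin n) ℝ :=
  of fun i j ↦ if (i : ℕ) = j + 1 then s else if (i : ℕ) ≤ j ∧ Even ((j : ℕ) - i) then t else 0

lemma checkerboard_apply_of_eq_succ {n : ℕ} {i j : Fin n} (h : (i : ℕ) = j + 1) :
    checkerboard s t n i j = s := by
  simp [checkerboard, h]

lemma checkerboard_apply_of_succ_lt {n : ℕ} {i j : Fin n} (h : (j : ℕ) + 1 < i) :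
    checkerboard s t n i j = 0 := by
  rw [checkerboard, of_apply, if_neg (by omega), if_neg (by omega)]

lemma isUpperHessenbergIcc_checkerboard (hs : 0 ≤ s) (hst : s ≤ t) (n : ℕ) :
    IsUpperHessenbergIcc s t (checkerboard s t n) := by
  refine ⟨fun i j ↦ checkerboard_apply_of_eq_succ, fun i j ↦ checkerboard_apply_of_succ_lt,
    fun i j h ↦ ?_⟩
  simp only [checkerboard, of_apply, if_neg (show (i : ℕ) ≠ j + 1 by omega)]
  split_ifs
  exacts [⟨hs.trans hst, le_rfl⟩, ⟨le_rfl, hs.trans hst⟩]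

lemma checkerboard_submatrix_succ (n : ℕ) :
    (checkerboard s t (n + 1)).submatrix Fin.succ Fin.succ = checkerboard s t n := by
  ext i j; simp [checkerboard]

lemma trailingMinor_checkerboard : ∀ {n q : ℕ}, q ≤ n →
    trailingMinor (checkerboard s t n) q = (checkerboard s t q).det
  | 0, 0, _ => by simp [trailingMinor]
  | n + 1, q, hq => by
    rcases Nat.lt_succ_iff_lt_or_eq.1 (Nat.lt_succ_of_le hq) with hq | rfl
    · rw [trailingMinor_of_ne _ (by omega), checkerboard_submatrix_succ,
        trailingMinor_checkerboard (by omega)]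
    · exact trailingMinor_self _

lemma hessSum_even_seqM : ∀ q : ℕ,
    hessSum s (fun j ↦ if Even j then t else 0) (seqM s t) q = seqM s t (q + 1)
  | 0 => by simp [hessSum_zero, seqM]
  | 1 => by simp [hessSum_succ, hessSum_zero, seqM, sq]
  | q + 2 => by
    rw [hessSum_succ, hessSum_succ]
    simp only [Nat.even_add_one, not_not, Even.zero, not_true_eq_false, if_true, if_false]
    rw [hessSum_even_seqM q, seqM]
    ring

theorem det_checkerboard : ∀ n : ℕ, (checkerboard s t n).det = seqM s t n
  | 0 => det_isEmpty
  | m + 1 => by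
    rw [det_eq_hessSum_trailingMinor s _ (fun _ _ ↦ checkerboard_apply_of_eq_succ)
      (fun _ _ ↦ checkerboard_apply_of_succ_lt), ← hessSum_even_seqM]
    refine hessSum_congr (fun j hj ↦ ?_) (fun j hj ↦ ?_)
    · simp [checkerboard, Fin.val_natCast, Nat.mod_eq_of_lt (show j < m + 1 by omega)]
    · rw [trailingMinor_checkerboard (by omega), det_checkerboard j]

end UpperHessenbergIcc

theorem max_abs_det_case_I (s t : ℝ) (hs : 0 < s) (hst : s ≤ t) :
    ∀ n : ℕ, 1 ≤ n →
      IsGreatest {x : ℝ | ∃ A : Matrix (Fin n) (Fin n) ℝ,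
        IsUpperHessenbergIcc s t A ∧ x = |A.det|} (seqM s t n) := by
  intro n _
  refine ⟨⟨checkerboard s t n, isUpperHessenbergIcc_checkerboard hs.le hst n, ?_⟩, ?_⟩
  · rw [det_checkerboard, abs_of_nonneg (seqM_nonneg hs.le (hs.le.trans hst) n)]
  · rintro x ⟨A, hA, rfl⟩
    exact abs_det_le_seqM hs.le hst hA
end

section
/- The maximum absolute determinant of an n×n upper Hessenberg matrix with subdiagonal entries fixed at 1 and upper-triangular entries from {0,1} is the n-th Fibonacci-type number F_n defined by F_1 = 1, F_2 = 1, F_n = F_{n−1} + F_{n−2}. -/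
/-- `A` is an `n×n` upper Hessenberg matrix with subdiagonal entries `1`
and upper-triangular entries in `{0,1}`. -/
def IsUpperHessenberg01 {n : ℕ} (A : Matrix (Fin n) (Fin n) ℝ) : Prop :=
  (∀ i j : Fin n, (i : ℕ) = (j : ℕ) + 1 → A i j = 1) ∧
  (∀ i j : Fin n, (j : ℕ) + 1 < (i : ℕ) → A i j = 0) ∧
  (∀ i j : Fin n, (i : ℕ) ≤ (j : ℕ) → A i j = 0 ∨ A i j = 1)

lemma succAbove_one_zero {n : ℕ} : (1 : Fin (n+2)).succAbove 0 = 0 := by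
  rw [Fin.succAbove_of_castSucc_lt]
  · rfl
  · simp [Fin.lt_def]

lemma succAbove_one_of_ne {n : ℕ} (i : Fin (n+1)) (h : i ≠ 0) :
    (1 : Fin (n+2)).succAbove i = i.succ := by
  apply Fin.succAbove_of_le_castSucc
  rw [Fin.le_def]
  have : (i:ℕ) ≠ 0 := fun h0 => h (Fin.ext h0)
  simp only [Fin.val_one, Fin.coe_castSucc]
  omega

lemma succAbove_one_val {n : ℕ} (i : Fin (n+1)) :
    (((1 : Fin (n+2)).succAbove i : Fin (n+2)) : ℕ) = if (i:ℕ) = 0 then 0 else (i:ℕ) + 1 := by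
  by_cases h : i = 0
  · subst h; rw [succAbove_one_zero]; simp
  · rw [succAbove_one_of_ne i h, Fin.val_succ]
    have : (i:ℕ) ≠ 0 := fun h0 => h (Fin.ext h0)
    simp [this]

/-- Laplace expansion along the first column for matrices with `A 1 0 = 1`
and zeros below the subdiagonal in the first column. -/
lemma det_expand {n : ℕ} (A : Matrix (Fin (n+2)) (Fin (n+2)) ℝ)
    (hsub : A 1 0 = 1) (hlow : ∀ i : Fin n, A i.succ.succ 0 = 0) :
    A.det = A 0 0 * (A.submatrix Fin.succ Fin.succ).det
      - (A.submatrix ((1:Fin (n+2)).succAbove) Fin.succ).det := by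
  rw [Matrix.det_succ_column_zero, Fin.sum_univ_succ, Fin.sum_univ_succ]
  have hz : ∀ i : Fin n,
      (-1:ℝ)^((i.succ.succ : Fin (n+2)):ℕ) * A i.succ.succ 0 *
        (A.submatrix (Fin.succAbove i.succ.succ) Fin.succ).det = 0 := by
    intro i; rw [hlow i]; ring
  rw [Finset.sum_congr rfl (fun i _ => hz i), Finset.sum_const_zero]
  simp [Fin.succAbove_zero, hsub, Fin.succ_zero_eq_one]
  ring

lemma hess_sub0 {n : ℕ} {A : Matrix (Fin (n+2)) (Fin (n+2)) ℝ}
    (h : IsUpperHessenberg01 A) :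
    IsUpperHessenberg01 (A.submatrix Fin.succ Fin.succ) := by
  obtain ⟨h1, h2, h3⟩ := h
  exact ⟨fun i j hij => h1 _ _ (by simp only [Fin.val_succ]; omega),
    fun i j hij => h2 _ _ (by simp only [Fin.val_succ]; omega),
    fun i j hij => h3 _ _ (by simp only [Fin.val_succ]; omega)⟩

lemma hess_sub1 {n : ℕ} {A : Matrix (Fin (n+2)) (Fin (n+2)) ℝ}
    (h : IsUpperHessenberg01 A) :
    IsUpperHessenberg01 (A.submatrix ((1:Fin (n+2)).succAbove) Fin.succ) := by
  obtain ⟨h1, h2, h3⟩ := h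
  refine ⟨fun i j hij => ?_, fun i j hij => ?_, fun i j hij => ?_⟩
  · have hi : i ≠ 0 := by
      intro h0; subst h0
      simp only [Fin.val_zero] at hij
      omega
    show A _ _ = 1
    rw [succAbove_one_of_ne i hi]
    exact h1 _ _ (by simp only [Fin.val_succ, Fin.val_zero]; omega)
  · have hi : i ≠ 0 := by
      intro h0; subst h0
      simp only [Fin.val_zero] at hij
      omega
    show A _ _ = 0
    rw [succAbove_one_of_ne i hi]
    exact h2 _ _ (by simp only [Fin.val_succ, Fin.val_zero]; omega)
  · show A _ _ = 0 ∨ A _ _ = 1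
    by_cases hi : i = 0
    · subst hi; rw [succAbove_one_zero]
      exact h3 _ _ (by simp)
    · rw [succAbove_one_of_ne i hi]
      exact h3 _ _ (by simp only [Fin.val_succ, Fin.val_zero]; omega)

def Emat (n : ℕ) : Matrix (Fin n) (Fin n) ℝ := fun i j =>
  if (i:ℕ) = (j:ℕ) + 1 ∨ ((i:ℕ) ≤ (j:ℕ) ∧ ((i:ℕ)+(j:ℕ)) % 2 = 0) then 1 else 0

def Gmat (n : ℕ) : Matrix (Fin n) (Fin n) ℝ := fun i j =>
  if (i:ℕ) = (j:ℕ) + 1 ∨ (1 ≤ (i:ℕ) ∧ (i:ℕ) ≤ (j:ℕ) ∧ ((i:ℕ)+(j:ℕ)) % 2 = 0)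
     ∨ ((i:ℕ) = 0 ∧ (j:ℕ) % 2 = 1) then 1 else 0

lemma hessE (n : ℕ) : IsUpperHessenberg01 (Emat n) :=
  ⟨fun _ _ hij => if_pos (Or.inl hij),
   fun _ _ hij => if_neg (by omega),
   fun i j _ => by unfold Emat; split <;> simp⟩

lemma hessG (n : ℕ) : IsUpperHessenberg01 (Gmat n) :=
  ⟨fun _ _ hij => if_pos (Or.inl hij),
   fun _ _ hij => if_neg (by omega),
   fun i j _ => by unfold Gmat; split <;> simp⟩

lemma Esub0 (n : ℕ) : (Emat (n+1)).submatrix Fin.succ Fin.succ = Emat n := by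
  funext i j
  simp only [Matrix.submatrix_apply, Emat, Fin.val_succ]
  exact if_congr (by omega) rfl rfl

lemma Esub1 (n : ℕ) :
    (Emat (n+2)).submatrix ((1:Fin (n+2)).succAbove) Fin.succ = Gmat (n+1) := by
  funext i j
  simp only [Matrix.submatrix_apply, Emat, Gmat, Fin.val_succ, succAbove_one_val]
  by_cases h : (i:ℕ) = 0
  · simp only [if_pos h]
    exact if_congr (by omega) rfl rfl
  · simp only [if_neg h]
    exact if_congr (by omega) rfl rfl

lemma Gsub1 (n : ℕ) :
    (Gmat (n+2)).submatrix ((1:Fin (n+2)).succAbove) Fin.succ = Emat (n+1) := by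
  funext i j
  simp only [Matrix.submatrix_apply, Emat, Gmat, Fin.val_succ, succAbove_one_val]
  by_cases h : (i:ℕ) = 0
  · simp only [if_pos h]
    refine if_congr ?_ rfl rfl
    simp only [true_and, false_and, and_true, eq_self_iff_true]
    omega
  · simp only [if_neg h]
    exact if_congr (by omega) rfl rfl

lemma detEG : ∀ n : ℕ, (Emat (n+1)).det = (Nat.fib (n+1) : ℝ) ∧
    (Gmat (n+1)).det = -(Nat.fib n : ℝ) := by
  intro n
  induction n with
  | zero =>
      constructor
      · rw [Matrix.det_fin_one]; norm_num [Emat]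
      · rw [Matrix.det_fin_one]; norm_num [Gmat]
  | succ n ih =>
      have hE1 : Emat (n+2) 1 0 = 1 := (hessE (n+2)).1 1 0 (by simp)
      have hG1 : Gmat (n+2) 1 0 = 1 := (hessG (n+2)).1 1 0 (by simp)
      have hEl : ∀ i : Fin n, Emat (n+2) i.succ.succ 0 = 0 :=
        fun i => (hessE (n+2)).2.1 _ _ (by simp only [Fin.val_succ, Fin.val_zero]; omega)
      have hGl : ∀ i : Fin n, Gmat (n+2) i.succ.succ 0 = 0 :=
        fun i => (hessG (n+2)).2.1 _ _ (by simp only [Fin.val_succ, Fin.val_zero]; omega)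
      have hE00 : Emat (n+2) 0 0 = 1 := by norm_num [Emat]
      have hG00 : Gmat (n+2) 0 0 = 0 := by norm_num [Gmat]
      constructor
      · rw [det_expand _ hE1 hEl, Esub0, Esub1, hE00, ih.1, ih.2, Nat.fib_add_two]
        push_cast; ring
      · rw [det_expand _ hG1 hGl, Gsub1, hG00, ih.1]
        ring

lemma bound : ∀ n : ℕ,
    (∀ A : Matrix (Fin (n+1)) (Fin (n+1)) ℝ, IsUpperHessenberg01 A →
      |A.det| ≤ (Nat.fib (n+1) : ℝ)) ∧
    (∀ A B : Matrix (Fin (n+1)) (Fin (n+1)) ℝ, IsUpperHessenberg01 A →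
      IsUpperHessenberg01 B → (∀ i j : Fin (n+1), i ≠ 0 → A i j = B i j) →
      |A.det - B.det| ≤ (Nat.fib (n+2) : ℝ)) := by
  intro n
  induction n with
  | zero =>
      constructor
      · intro A hA
        rw [Matrix.det_fin_one]
        rcases hA.2.2 0 0 (le_refl _) with h | h <;> rw [h] <;> norm_num
      · intro A B hA hB _
        rw [Matrix.det_fin_one, Matrix.det_fin_one]
        rcases hA.2.2 0 0 (le_refl _) with h | h <;>
          rcases hB.2.2 0 0 (le_refl _) with h' | h' <;>
          rw [h, h'] <;> norm_num
  | succ n ih =>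
      have fible : (Nat.fib (n+1) : ℝ) ≤ (Nat.fib (n+2) : ℝ) :=
        Nat.cast_le.mpr (Nat.fib_mono (by omega))
      constructor
      · intro A hA
        rw [det_expand A (hA.1 1 0 (by simp))
          (fun i => hA.2.1 _ _ (by simp only [Fin.val_succ, Fin.val_zero]; omega))]
        rcases hA.2.2 0 0 (le_refl _) with h0 | h0 <;> rw [h0]
        · rw [zero_mul, zero_sub, abs_neg]
          exact le_trans (ih.1 _ (hess_sub1 hA)) fible
        · rw [one_mul]
          apply ih.2 _ _ (hess_sub0 hA) (hess_sub1 hA)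
          intro i j hi
          simp only [Matrix.submatrix_apply]
          rw [succAbove_one_of_ne i hi]
      · intro A B hA hB hAB
        rw [det_expand A (hA.1 1 0 (by simp))
            (fun i => hA.2.1 _ _ (by simp only [Fin.val_succ, Fin.val_zero]; omega)),
          det_expand B (hB.1 1 0 (by simp))
            (fun i => hB.2.1 _ _ (by simp only [Fin.val_succ, Fin.val_zero]; omega))]
        have e0 : A.submatrix Fin.succ Fin.succ = B.submatrix Fin.succ Fin.succ := by
          funext i j
          exact hAB i.succ j.succ (Fin.succ_ne_zero i)
        rw [e0]
        have key : (A 0 0 * (B.submatrix Fin.succ Fin.succ).det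
              - (A.submatrix ((1:Fin (n+2)).succAbove) Fin.succ).det)
            - (B 0 0 * (B.submatrix Fin.succ Fin.succ).det
              - (B.submatrix ((1:Fin (n+2)).succAbove) Fin.succ).det)
            = (A 0 0 - B 0 0) * (B.submatrix Fin.succ Fin.succ).det
              - ((A.submatrix ((1:Fin (n+2)).succAbove) Fin.succ).det
                - (B.submatrix ((1:Fin (n+2)).succAbove) Fin.succ).det) := by ring
        rw [key]
        have h1 : |(A 0 0 - B 0 0) * (B.submatrix Fin.succ Fin.succ).det|
            ≤ (Nat.fib (n+1) : ℝ) := by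
          rw [abs_mul]
          have hab : |A 0 0 - B 0 0| ≤ 1 := by
            rcases hA.2.2 0 0 (le_refl _) with h | h <;>
              rcases hB.2.2 0 0 (le_refl _) with h' | h' <;>
              rw [h, h'] <;> norm_num
          calc |A 0 0 - B 0 0| * |(B.submatrix Fin.succ Fin.succ).det|
              ≤ 1 * (Nat.fib (n+1) : ℝ) :=
                mul_le_mul hab (ih.1 _ (hess_sub0 hB)) (abs_nonneg _) zero_le_one
            _ = (Nat.fib (n+1) : ℝ) := one_mul _
        have h2 : |(A.submatrix ((1:Fin (n+2)).succAbove) Fin.succ).det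
            - (B.submatrix ((1:Fin (n+2)).succAbove) Fin.succ).det|
            ≤ (Nat.fib (n+2) : ℝ) := by
          apply ih.2 _ _ (hess_sub1 hA) (hess_sub1 hB)
          intro i j hi
          simp only [Matrix.submatrix_apply]
          apply hAB
          rw [succAbove_one_of_ne i hi]
          exact Fin.succ_ne_zero i
        calc |_ - _| ≤ |(A 0 0 - B 0 0) * (B.submatrix Fin.succ Fin.succ).det|
              + |(A.submatrix ((1:Fin (n+2)).succAbove) Fin.succ).det
                - (B.submatrix ((1:Fin (n+2)).succAbove) Fin.succ).det| := abs_sub _ _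
          _ ≤ (Nat.fib (n+1) : ℝ) + (Nat.fib (n+2) : ℝ) := add_le_add h1 h2
          _ = (Nat.fib (n+3) : ℝ) := by
              have : Nat.fib (n+3) = Nat.fib (n+1) + Nat.fib (n+2) := Nat.fib_add_two
              rw [this]; push_cast; ring

theorem max_abs_det_zero_one (n : ℕ) (hn : 1 ≤ n) :
    IsGreatest {x : ℝ | ∃ A : Matrix (Fin n) (Fin n) ℝ,
      IsUpperHessenberg01 A ∧ x = |A.det|} (Nat.fib n : ℝ) := by
  obtain ⟨m, rfl⟩ : ∃ m, n = m + 1 := ⟨n - 1, by omega⟩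
  constructor
  · exact ⟨Emat (m+1), hessE _, by rw [(detEG m).1, Nat.abs_cast]⟩
  · rintro x ⟨A, hA, rfl⟩
    exact (bound m).1 A hA
end

section
/- For s < 0 and t > 0, the maximum absolute determinant of an n×n upper Hessenberg matrix with subdiagonal entries fixed at s and upper-triangular entries in [0,t] equals t·(t−s)^{n−1}. -/
open Matrix

lemma Fin.val_one_succAbove {n : ℕ} (i : Fin (n + 1)) :
    ((1 : Fin (n + 2)).succAbove i : ℕ) = if (i : ℕ) = 0 then 0 else (i : ℕ) + 1 := by
  simp only [Fin.succAbove, Fin.lt_def]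
  split_ifs <;> simp_all

lemma Matrix.det_succ_column_zero_of_lower_zero {R : Type*} [CommRing R] {n : ℕ}
    (A : Matrix (Fin (n + 2)) (Fin (n + 2)) R) (h : ∀ i : Fin (n + 2), 1 < (i : ℕ) → A i 0 = 0) :
    A.det = A 0 0 * (A.submatrix Fin.succ Fin.succ).det
      - A 1 0 * (A.submatrix (1 : Fin (n + 2)).succAbove Fin.succ).det := by
  have h_col : ∀ i : Fin n, A i.succ.succ 0 = 0 := fun i => h _ (by simp)
  rw [det_succ_column_zero, Fin.sum_univ_succ, Fin.sum_univ_succ]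
  simp [h_col, Fin.succAbove_zero]
  ring

namespace IsUpperHessenbergIcc

variable {s t : ℝ}

lemma submatrix {m n : ℕ} {A : Matrix (Fin n) (Fin n) ℝ} (hA : IsUpperHessenbergIcc s t A)
    {r c : Fin m → Fin n}
    (h_sub : ∀ i j : Fin m, (i : ℕ) = (j : ℕ) + 1 → (r i : ℕ) = (c j : ℕ) + 1)
    (h_low : ∀ i j : Fin m, (j : ℕ) + 1 < (i : ℕ) → (c j : ℕ) + 1 < (r i : ℕ))
    (h_upp : ∀ i j : Fin m, (i : ℕ) ≤ (j : ℕ) → (r i : ℕ) ≤ (c j : ℕ)) :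
    IsUpperHessenbergIcc s t (A.submatrix r c) :=
  ⟨fun i j hij => hA.1 _ _ (h_sub i j hij), fun i j hij => hA.2.1 _ _ (h_low i j hij),
    fun i j hij => hA.2.2 _ _ (h_upp i j hij)⟩

lemma submatrix_succ_s6 {n : ℕ} {A : Matrix (Fin (n + 1)) (Fin (n + 1)) ℝ}
    (hA : IsUpperHessenbergIcc s t A) : IsUpperHessenbergIcc s t (A.submatrix Fin.succ Fin.succ) :=
  hA.submatrix (by simp) (by simp) (by simp)

lemma submatrix_one_succAbove_succ {n : ℕ} {A : Matrix (Fin (n + 2)) (Fin (n + 2)) ℝ}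
    (hA : IsUpperHessenbergIcc s t A) :
    IsUpperHessenbergIcc s t (A.submatrix (1 : Fin (n + 2)).succAbove Fin.succ) := by
  refine hA.submatrix ?_ ?_ ?_ <;>
  · intro i j hij
    rw [Fin.val_one_succAbove, Fin.val_succ]
    split_ifs <;> omega

lemma abs_det_le {n : ℕ} {A : Matrix (Fin (n + 1)) (Fin (n + 1)) ℝ}
    (hA : IsUpperHessenbergIcc s t A) : |A.det| ≤ t * (t + |s|) ^ n := by
  induction n with
  | zero =>
    obtain ⟨h_nonneg, h_le⟩ := hA.2.2 0 0 le_rfl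
    simpa [det_fin_one, abs_of_nonneg h_nonneg] using h_le
  | succ m ih =>
    obtain ⟨h_nonneg, h_le⟩ := hA.2.2 0 0 le_rfl
    have h_sub : A 1 0 = s := hA.1 1 0 (by simp)
    have ht : 0 ≤ t := h_nonneg.trans h_le
    have h_det_succ := ih hA.submatrix_succ_s6
    have h_det_one := ih hA.submatrix_one_succAbove_succ
    rw [A.det_succ_column_zero_of_lower_zero fun i hi => hA.2.1 i 0 (by simpa using hi), h_sub]
    calc _ ≤ |A 0 0| * |(A.submatrix Fin.succ Fin.succ).det|
            + |s| * |(A.submatrix (1 : Fin (m + 2)).succAbove Fin.succ).det| := by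
          rw [← abs_mul, ← abs_mul]
          exact abs_sub _ _
      _ ≤ t * (t * (t + |s|) ^ m) + |s| * (t * (t + |s|) ^ m) := by
          rw [abs_of_nonneg h_nonneg]
          gcongr
      _ = t * (t + |s|) ^ (m + 1) := by ring

end IsUpperHessenbergIcc

def hessenbergConst (s t : ℝ) (n : ℕ) : Matrix (Fin n) (Fin n) ℝ :=
  fun i j => if (i : ℕ) ≤ (j : ℕ) then t else if (i : ℕ) = (j : ℕ) + 1 then s else 0

lemma isUpperHessenbergIcc_hessenbergConst {s t : ℝ} (ht : 0 ≤ t) (n : ℕ) :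
    IsUpperHessenbergIcc s t (hessenbergConst s t n) := by
  refine ⟨fun i j hij => ?_, fun i j hij => ?_, fun i j hij => ?_⟩ <;>
    simp only [hessenbergConst]
  · rw [if_neg (by omega), if_pos hij]
  · rw [if_neg (by omega), if_neg (by omega)]
  · rw [if_pos hij]
    exact ⟨ht, le_rfl⟩

lemma hessenbergConst_submatrix_succ (s t : ℝ) (n : ℕ) :
    (hessenbergConst s t (n + 1)).submatrix Fin.succ Fin.succ = hessenbergConst s t n := by
  ext i j
  simp [hessenbergConst]

lemma hessenbergConst_submatrix_one_succAbove_succ (s t : ℝ) (n : ℕ) :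
    (hessenbergConst s t (n + 2)).submatrix (1 : Fin (n + 2)).succAbove Fin.succ =
      hessenbergConst s t (n + 1) := by
  ext i j
  simp only [submatrix_apply, hessenbergConst, Fin.val_succ, Fin.val_one_succAbove]
  split_ifs <;> first | rfl | omega

lemma det_hessenbergConst (s t : ℝ) (n : ℕ) :
    (hessenbergConst s t (n + 1)).det = t * (t - s) ^ n := by
  induction n with
  | zero => simp [hessenbergConst]
  | succ m ih =>
    have h_col : ∀ i : Fin (m + 2), 1 < (i : ℕ) → hessenbergConst s t (m + 2) i 0 = 0 :=
      fun i hi => by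
        simp only [hessenbergConst]
        split_ifs <;> simp_all
    rw [det_succ_column_zero_of_lower_zero _ h_col, hessenbergConst_submatrix_succ,
      hessenbergConst_submatrix_one_succAbove_succ, ih]
    have h_00 : hessenbergConst s t (m + 2) 0 0 = t := by simp [hessenbergConst]
    have h_10 : hessenbergConst s t (m + 2) 1 0 = s := by simp [hessenbergConst]
    rw [h_00, h_10]
    ring

theorem max_abs_det_negative_s (s t : ℝ) (hs : s < 0) (ht : 0 < t) :
    ∀ n : ℕ, 1 ≤ n →
      IsGreatest {x : ℝ | ∃ A : Matrix (Fin n) (Fin n) ℝ,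
        IsUpperHessenbergIcc s t A ∧ x = |A.det|} (t * (t - s) ^ (n - 1)) := by
  intro n hn
  obtain ⟨m, rfl⟩ := Nat.exists_eq_add_of_le' hn
  have h_pos : 0 < t * (t - s) ^ m := by
    have : 0 < t - s := by linarith
    positivity
  refine ⟨⟨hessenbergConst s t (m + 1), isUpperHessenbergIcc_hessenbergConst ht.le _, ?_⟩, ?_⟩
  · rw [det_hessenbergConst, abs_of_pos h_pos, Nat.add_sub_cancel]
  · rintro _ ⟨A, hA, rfl⟩
    simpa [abs_of_neg hs, sub_eq_add_neg] using hA.abs_det_le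
end

section
/- Let A be an n×n upper Hessenberg matrix with subdiagonal s and upper-triangular entries in {0,t} (t > 0). Viewing det(A) as a polynomial in s, if the coefficient of s^{n−2} vanishes, i.e. a_{11}a_{2n} + a_{12}a_{3n} + ⋯ + a_{1(n−1)}a_{nn} = 0, then the absolute value of the coefficient of s^{n−3}, namely |∑_{1≤i<j≤n−1} a_{1i}·a_{(i+1)j}·a_{(j+1)n}|, is at most ⌊n/2⌋·⌊(n−1)/2⌋·t³. -/
/-!
All entries are nonnegative, so the vanishing of `∑ a₁ᵢ a₍ᵢ₊₁₎ₙ` forces every term to vanish: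
the indices `i` with `a₁ᵢ ≠ 0` and those with `a₍ᵢ₊₁₎ₙ ≠ 0` form disjoint sets `B`, `C` of
`{1, …, n-1}`. Bounding the middle factor by `t`, the coefficient is at most
`t · (∑ a₁ᵢ) (∑ a₍ⱼ₊₁₎ₙ) ≤ |B| |C| t³`, and `|B| + |C| ≤ n - 1` gives
`|B| |C| ≤ ⌊n/2⌋ ⌊(n-1)/2⌋`.
-/

open Finset

lemma Nat.mul_le_half_mul_half_of_add_le {p q m : ℕ} (h : p + q ≤ m) :
    p * q ≤ (m + 1) / 2 * (m / 2) := by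
  have hhalves : (m + 1) / 2 + m / 2 = m := by omega
  have hbalanced : m / 2 ≤ (m + 1) / 2 ∧ (m + 1) / 2 ≤ m / 2 + 1 := by omega
  zify at h hhalves hbalanced ⊢
  nlinarith [sq_nonneg ((p : ℤ) - q), sq_nonneg ((p : ℤ) + q)]

lemma sum_le_card_filter_ne_zero_mul {ι : Type*} [Fintype ι] {f : ι → ℝ} {t : ℝ}
    (hf : ∀ i, f i ≤ t) :
    ∑ i, f i ≤ #(univ.filter (f · ≠ 0)) * t := by
  rw [← sum_filter_ne_zero, ← nsmul_eq_mul]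
  exact sum_le_card_nsmul _ _ _ fun i _ => hf i

lemma abs_sum_mul_mul_le_of_sum_mul_eq_zero {ι : Type*} [Fintype ι] {t : ℝ} (ht : 0 ≤ t)
    {f g : ι → ℝ} {h : ι → ι → ℝ} (hf : ∀ i, f i ∈ Set.Icc 0 t) (hg : ∀ i, g i ∈ Set.Icc 0 t)
    (hh : ∀ i j, h i j ∈ Set.Icc 0 t) (hfg : ∑ i, f i * g i = 0) :
    |∑ i, ∑ j, f i * h i j * g j| ≤
      ((Fintype.card ι + 1) / 2 : ℕ) * (Fintype.card ι / 2 : ℕ) * t ^ 3 := by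
  classical
  set B := univ.filter (f · ≠ 0)
  set C := univ.filter (g · ≠ 0)
  have hdisj : Disjoint B C := by
    have hzero := (sum_eq_zero_iff_of_nonneg fun i _ => mul_nonneg (hf i).1 (hg i).1).mp hfg
    refine disjoint_filter.mpr fun i _ hfi hgi => ?_
    exact mul_ne_zero hfi hgi (hzero i (mem_univ i))
  have hcard : #B * #C ≤ (Fintype.card ι + 1) / 2 * (Fintype.card ι / 2) :=
    Nat.mul_le_half_mul_half_of_add_le <| (card_union_of_disjoint hdisj).symm.le.trans
      (card_le_univ _)
  have hnonneg : 0 ≤ ∑ i, ∑ j, f i * h i j * g j :=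
    sum_nonneg fun i _ => sum_nonneg fun j _ =>
      mul_nonneg (mul_nonneg (hf i).1 (hh i j).1) (hg j).1
  rw [abs_of_nonneg hnonneg]
  calc ∑ i, ∑ j, f i * h i j * g j
      ≤ ∑ i, ∑ j, f i * t * g j := by
        gcongr with i _ j _
        · exact (hg j).1
        · exact (hf i).1
        · exact (hh i j).2
    _ = t * ((∑ i, f i) * ∑ j, g j) := by
        rw [sum_mul_sum, mul_sum]
        exact sum_congr rfl fun i _ => by rw [mul_sum]; exact sum_congr rfl fun j _ => by ring
    _ ≤ t * ((#B * t) * (#C * t)) := by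
        gcongr
        · exact sum_nonneg fun j _ => (hg j).1
        · exact sum_le_card_filter_ne_zero_mul fun i => (hf i).2
        · exact sum_le_card_filter_ne_zero_mul fun j => (hg j).2
    _ = (#B * #C : ℕ) * t ^ 3 := by push_cast; ring
    _ ≤ _ := by gcongr; exact_mod_cast hcard

theorem coeff_bound_general (m : ℕ) (t : ℝ) (ht : 0 < t)
    (A : Matrix (Fin (m + 1)) (Fin (m + 1)) ℝ)
    (hup : ∀ i j : Fin (m + 1), (i : ℕ) ≤ (j : ℕ) → A i j = 0 ∨ A i j = t)
    (hvanish : ∑ i : Fin m, A 0 i.castSucc * A i.succ (Fin.last m) = 0) :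
    |∑ i : Fin m, ∑ j : Fin m,
        if i < j then A 0 i.castSucc * A i.succ j.castSucc * A j.succ (Fin.last m) else 0| ≤
      (((m + 1) / 2 : ℕ) : ℝ) * ((m / 2 : ℕ) : ℝ) * t ^ 3 := by
  have hIcc : ∀ i j : Fin (m + 1), (i : ℕ) ≤ (j : ℕ) → A i j ∈ Set.Icc 0 t := fun i j hij => by
    rcases hup i j hij with h | h <;> rw [h] <;> constructor <;> linarith
  have hmid : ∀ i j : Fin m,
      (if i < j then A i.succ j.castSucc else 0) ∈ Set.Icc 0 t := fun i j => by
    split_ifs with hij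
    · exact hIcc _ _ (by simpa using hij)
    · exact ⟨le_rfl, ht.le⟩
  have key := abs_sum_mul_mul_le_of_sum_mul_eq_zero ht.le (fun i => hIcc 0 i.castSucc (Nat.zero_le _))
    (fun j => hIcc j.succ (Fin.last m) (by simp)) hmid hvanish
  simp only [Fintype.card_fin, mul_ite, ite_mul, mul_zero, zero_mul] at key
  exact key

theorem coeff_bound (m : ℕ) (s t : ℝ) (ht : 0 < t)
    (A : Matrix (Fin (m + 1)) (Fin (m + 1)) ℝ)
    (hsub : ∀ i j : Fin (m + 1), (i : ℕ) = (j : ℕ) + 1 → A i j = s)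
    (hlow : ∀ i j : Fin (m + 1), (j : ℕ) + 1 < (i : ℕ) → A i j = 0)
    (hup : ∀ i j : Fin (m + 1), (i : ℕ) ≤ (j : ℕ) → A i j = 0 ∨ A i j = t)
    (hvanish : ∑ i : Fin m, A 0 i.castSucc * A i.succ (Fin.last m) = 0) :
    |∑ i : Fin m, ∑ j : Fin m,
        if i < j then A 0 i.castSucc * A i.succ j.castSucc * A j.succ (Fin.last m) else 0| ≤
      (((m + 1) / 2 : ℕ) : ℝ) * ((m / 2 : ℕ) : ℝ) * t ^ 3 :=
  coeff_bound_general m t ht A hup hvanish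
end

section
/- For n ≥ 4 and real x with x > (4/5)·n², the inequality x^{n−3} > ∑_{j≥2} C(n−1, 2j)·x^{n−1−2j} holds, where the sum is over j ≥ 2 with n−1−2j ≥ 0 (i.e. x^{n−3} > C(n−1,4)·x^{n−5} + C(n−1,6)·x^{n−7} + ⋯). -/
/-!
Divide by `x ^ (n - 3)`: the `j`-th term becomes `C(n-1, 2j) / x ^ (2j - 2)`. Since
`C(n-1, 2j) ≤ n ^ (2j) / (2j)! ≤ (n ^ 2) ^ (2j - 2) / (2j)!` and `n ^ 2 < 5x/4`, this ratio is at
most `(25/16) ^ (j-1) / (2j)!`, which is `≤ (1/2) ^ j` because `(2j)! ≥ 2 · 12 ^ (j-1)`;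
and `∑_{j ≥ 2} (1/2) ^ j = 1/2 < 1`.
-/

open Nat Finset

theorem Nat.two_mul_twelve_pow_le_factorial (i : ℕ) : 2 * 12 ^ i ≤ (2 * i + 2)! := by
  induction i with
  | zero => simp
  | succ i ih =>
    calc 2 * 12 ^ (i + 1) = 12 * (2 * 12 ^ i) := by ring
      _ ≤ ((2 * i + 3) * (2 * i + 4)) * (2 * i + 2)! := Nat.mul_le_mul (by nlinarith) ih
      _ = (2 * (i + 1) + 2)! := by
        rw [show 2 * (i + 1) + 2 = 2 * i + 2 + 1 + 1 by ring, factorial_succ (2 * i + 2 + 1),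
          factorial_succ (2 * i + 2)]
        ring

lemma twentyfive_sixteenths_pow_div_factorial_le (i : ℕ) :
    (25 / 16 : ℝ) ^ i / (2 * i + 2)! ≤ (1 / 2) ^ (i + 1) := by
  have hfact : (2 * 12 ^ i : ℝ) ≤ (2 * i + 2)! := by
    exact_mod_cast Nat.two_mul_twelve_pow_le_factorial i
  rw [div_le_iff₀ (by positivity)]
  calc (25 / 16 : ℝ) ^ i = (1 / 2) ^ (i + 1) * (2 * (25 / 8) ^ i) := by
        rw [show (25 / 16 : ℝ) = 1 / 2 * (25 / 8) by norm_num, mul_pow]; ring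
    _ ≤ (1 / 2) ^ (i + 1) * (2 * 12 ^ i) := by gcongr; norm_num
    _ ≤ (1 / 2) ^ (i + 1) * (2 * i + 2)! := by gcongr

lemma cast_choose_two_mul_add_two_le {m i : ℕ} {x : ℝ} (hi : 1 ≤ i) (hx : 4 / 5 * (m : ℝ) ^ 2 ≤ x) :
    (m.choose (2 * i + 2) : ℝ) ≤ (1 / 2) ^ (i + 1) * x ^ (2 * i) := by
  have hx0 : 0 ≤ x := le_trans (by positivity) hx
  have hpow : (m : ℝ) ^ (2 * i + 2) ≤ ((m : ℝ) ^ 2) ^ (2 * i) := by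
    rcases m.eq_zero_or_pos with rfl | hm
    · simp
    · rw [← pow_mul]
      exact pow_le_pow_right₀ (by exact_mod_cast hm) (by omega)
  calc (m.choose (2 * i + 2) : ℝ) ≤ (m : ℝ) ^ (2 * i + 2) / (2 * i + 2)! :=
        Nat.choose_le_pow_div _ _
    _ ≤ (5 / 4 * x) ^ (2 * i) / (2 * i + 2)! := by
        gcongr
        exact hpow.trans (by gcongr; linarith)
    _ = (25 / 16 : ℝ) ^ i / (2 * i + 2)! * x ^ (2 * i) := by
        rw [mul_pow, pow_mul]; ring
    _ ≤ (1 / 2) ^ (i + 1) * x ^ (2 * i) := by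
        gcongr
        exact twentyfive_sixteenths_pow_div_factorial_le i

lemma cast_choose_mul_pow_le {m j : ℕ} {x : ℝ} (hj : 2 ≤ j) (hjm : 2 * j ≤ m)
    (hx : 4 / 5 * (m : ℝ) ^ 2 ≤ x) :
    (m.choose (2 * j) : ℝ) * x ^ (m - 2 * j) ≤ (1 / 2) ^ j * x ^ (m - 2) := by
  obtain ⟨i, rfl⟩ : ∃ i, j = i + 1 := ⟨j - 1, by omega⟩
  have hx0 : 0 ≤ x := le_trans (by positivity) hx
  calc (m.choose (2 * (i + 1)) : ℝ) * x ^ (m - 2 * (i + 1))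
      ≤ (1 / 2) ^ (i + 1) * x ^ (2 * i) * x ^ (m - 2 * (i + 1)) := by
        gcongr
        exact cast_choose_two_mul_add_two_le (by omega) hx
    _ = (1 / 2) ^ (i + 1) * x ^ (m - 2) := by
        rw [mul_assoc, ← pow_add]
        congr 2
        omega

lemma sum_Icc_two_half_pow_le (K : ℕ) : ∑ j ∈ Icc 2 K, (1 / 2 : ℝ) ^ j ≤ 1 / 2 := by
  rw [← Ico_add_one_right_eq_Icc]
  exact (geom_sum_Ico_le_of_lt_one (by norm_num) (by norm_num)).trans_eq (by norm_num)

theorem ineq_four_general (n : ℕ) (x : ℝ) (hx : x > 4 / 5 * (n : ℝ) ^ 2) :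
    x ^ (n - 3) >
      ∑ j ∈ Finset.Icc 2 ((n - 1) / 2), ((n - 1).choose (2 * j) : ℝ) * x ^ (n - 1 - 2 * j) := by
  have hx0 : 0 < x := lt_of_le_of_lt (by positivity) hx
  have hx' : 4 / 5 * ((n - 1 : ℕ) : ℝ) ^ 2 ≤ x := by
    refine le_trans ?_ hx.le
    gcongr
    exact_mod_cast Nat.sub_le n 1
  calc ∑ j ∈ Icc 2 ((n - 1) / 2), ((n - 1).choose (2 * j) : ℝ) * x ^ (n - 1 - 2 * j)
      ≤ ∑ j ∈ Icc 2 ((n - 1) / 2), (1 / 2 : ℝ) ^ j * x ^ (n - 3) := by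
        refine sum_le_sum fun j hj ↦ ?_
        obtain ⟨hj2, hjK⟩ := mem_Icc.mp hj
        simpa only [Nat.sub_sub] using cast_choose_mul_pow_le hj2 (by omega) hx'
    _ ≤ 1 / 2 * x ^ (n - 3) := by
        rw [← sum_mul]
        gcongr
        exact sum_Icc_two_half_pow_le _
    _ < x ^ (n - 3) := by linarith [pow_pos hx0 (n - 3)]

theorem ineq_four (n : ℕ) (hn : 4 ≤ n) (x : ℝ) (hx : x > 4 / 5 * (n : ℝ) ^ 2) :
    x ^ (n - 3) >
      ∑ j ∈ Finset.Icc 2 ((n - 1) / 2), ((n - 1).choose (2 * j) : ℝ) * x ^ (n - 1 - 2 * j) :=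
  ineq_four_general n x hx
end

section
/- For n ≥ 2 and real x > (4/5)·n², one has x^{n−1} + ⌊n/2⌋·⌊(n−1)/2⌋·x^{n−3} > C(n−1,1)·x^{n−2} + C(n−1,3)·x^{n−4} + C(n−1,5)·x^{n−6} + ⋯ (sum over odd k with n−1−k ≥ 0 of C(n−1,k)·x^{n−1−k}). -/
lemma choose_step_nat (m k : ℕ) (hk : 1 ≤ k) :
    6 * m.choose (k + 2) ≤ m ^ 2 * m.choose k := by
  have h1 : m.choose (k + 2) * (k + 2) = m.choose (k + 1) * (m - (k + 1)) :=
    Nat.choose_succ_right_eq m (k + 1)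
  have h2 : m.choose (k + 1) * (k + 1) = m.choose k * (m - k) :=
    Nat.choose_succ_right_eq m k
  have key : m.choose (k + 2) * ((k + 1) * (k + 2)) =
      m.choose k * ((m - k) * (m - (k + 1))) := by
    calc m.choose (k + 2) * ((k + 1) * (k + 2))
        = (m.choose (k + 2) * (k + 2)) * (k + 1) := by ring
      _ = (m.choose (k + 1) * (m - (k + 1))) * (k + 1) := by rw [h1]
      _ = (m.choose (k + 1) * (k + 1)) * (m - (k + 1)) := by ring
      _ = (m.choose k * (m - k)) * (m - (k + 1)) := by rw [h2]
      _ = m.choose k * ((m - k) * (m - (k + 1))) := by ring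
  have h6 : 6 ≤ (k + 1) * (k + 2) := by nlinarith
  calc 6 * m.choose (k + 2) ≤ ((k + 1) * (k + 2)) * m.choose (k + 2) :=
        Nat.mul_le_mul_right _ h6
    _ = m.choose k * ((m - k) * (m - (k + 1))) := by rw [mul_comm]; exact key
    _ ≤ m.choose k * (m * m) := by
        exact Nat.mul_le_mul_left _ (Nat.mul_le_mul (Nat.sub_le _ _) (Nat.sub_le _ _))
    _ = m ^ 2 * m.choose k := by ring

theorem ineq_one (n : ℕ) (hn : 2 ≤ n) (x : ℝ) (hx : x > 4 / 5 * (n : ℝ) ^ 2) :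
    x ^ (n - 1) + ((n / 2 : ℕ) : ℝ) * (((n - 1) / 2 : ℕ) : ℝ) * x ^ (n - 3) >
      ∑ j ∈ Finset.range (n / 2),
        ((n - 1).choose (2 * j + 1) : ℝ) * x ^ (n - 1 - (2 * j + 1)) := by
  have hn2 : (2 : ℝ) ≤ (n : ℝ) := by exact_mod_cast hn
  have hx4 : (16 / 5 : ℝ) < x := by nlinarith
  have hx1 : (1 : ℝ) < x := by linarith
  have hx0 : (0 : ℝ) < x := by linarith
  have hcast : ((n - 1 : ℕ) : ℝ) = (n : ℝ) - 1 := by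
    have : 1 ≤ n := by omega
    push_cast [Nat.cast_sub this]; ring
  have hn1 : (0 : ℝ) ≤ (n : ℝ) - 1 := by linarith
  -- key geometric bound
  have key : ∀ j : ℕ, ((n - 1).choose (2 * j + 1) : ℝ) * x ^ (n - 1 - (2 * j + 1))
      ≤ ((n : ℝ) - 1) * x ^ (n - 2) * (5 / 24) ^ j := by
    intro j
    induction j with
    | zero =>
      have h1 : 2 * 0 + 1 = 1 := by norm_num
      have h2 : n - 1 - (2 * 0 + 1) = n - 2 := by omega
      rw [h1] at h2 ⊢
      rw [h2, Nat.choose_one_right, hcast]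
      simp
    | succ j ih =>
      by_cases h : 2 * (j + 1) + 1 ≤ n - 1
      · have he : n - 1 - (2 * j + 1) = (n - 1 - (2 * (j + 1) + 1)) + 2 := by omega
        set e := n - 1 - (2 * (j + 1) + 1) with hedef
        have hnat : 6 * (n - 1).choose (2 * j + 1 + 2) ≤ (n - 1) ^ 2 * (n - 1).choose (2 * j + 1) :=
          choose_step_nat (n - 1) (2 * j + 1) (by omega)
        have hnatR : 6 * ((n - 1).choose (2 * j + 1 + 2) : ℝ)
            ≤ ((n - 1 : ℕ) : ℝ) ^ 2 * ((n - 1).choose (2 * j + 1) : ℝ) := by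
          exact_mod_cast hnat
        have hmn : ((n - 1 : ℕ) : ℝ) ^ 2 ≤ (n : ℝ) ^ 2 := by
          rw [hcast]; nlinarith
        have hidx : 2 * (j + 1) + 1 = 2 * j + 1 + 2 := by ring
        have hxe : (0 : ℝ) ≤ x ^ e := le_of_lt (pow_pos hx0 e)
        have hx2 : (n : ℝ) ^ 2 < 5 / 4 * x ^ 2 := by nlinarith
        -- C2 * x^e ≤ 5/24 * (C1 * x^(e+2))
        have step : ((n - 1).choose (2 * j + 1 + 2) : ℝ) * x ^ e
            ≤ 5 / 24 * (((n - 1).choose (2 * j + 1) : ℝ) * x ^ (e + 2)) := by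
          have hC2 : ((n - 1).choose (2 * j + 1 + 2) : ℝ)
              ≤ 5 / 24 * x ^ 2 * ((n - 1).choose (2 * j + 1) : ℝ) := by
            have hC1pos : (0 : ℝ) ≤ ((n - 1).choose (2 * j + 1) : ℝ) := by positivity
            nlinarith
          calc ((n - 1).choose (2 * j + 1 + 2) : ℝ) * x ^ e
              ≤ (5 / 24 * x ^ 2 * ((n - 1).choose (2 * j + 1) : ℝ)) * x ^ e :=
                mul_le_mul_of_nonneg_right hC2 hxe
            _ = 5 / 24 * (((n - 1).choose (2 * j + 1) : ℝ) * x ^ (e + 2)) := by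
                rw [pow_add]; ring
        rw [hidx]
        calc ((n - 1).choose (2 * j + 1 + 2) : ℝ) * x ^ e
            ≤ 5 / 24 * (((n - 1).choose (2 * j + 1) : ℝ) * x ^ (e + 2)) := step
          _ = 5 / 24 * (((n - 1).choose (2 * j + 1) : ℝ) * x ^ (n - 1 - (2 * j + 1))) := by
              rw [he]
          _ ≤ 5 / 24 * (((n : ℝ) - 1) * x ^ (n - 2) * (5 / 24) ^ j) := by
              apply mul_le_mul_of_nonneg_left ih; norm_num
          _ = ((n : ℝ) - 1) * x ^ (n - 2) * (5 / 24) ^ (j + 1) := by ring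
      · have hz : (n - 1).choose (2 * (j + 1) + 1) = 0 :=
          Nat.choose_eq_zero_of_lt (by omega)
        rw [hz]
        simp only [Nat.cast_zero, zero_mul]
        positivity
  -- sum bound
  have hsumgeom : ∑ j ∈ Finset.range (n / 2), ((5 : ℝ) / 24) ^ j ≤ 24 / 19 := by
    have h := geom_sum_eq (show (5 : ℝ) / 24 ≠ 1 by norm_num) (n / 2)
    rw [h]
    have h2 : (0 : ℝ) ≤ (5 / 24 : ℝ) ^ (n / 2) := by positivity
    rw [div_le_iff_of_neg (by norm_num : (5 / 24 : ℝ) - 1 < 0)]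
    linarith
  have hA : (0 : ℝ) ≤ ((n : ℝ) - 1) * x ^ (n - 2) := by positivity
  have hsum : ∑ j ∈ Finset.range (n / 2),
      ((n - 1).choose (2 * j + 1) : ℝ) * x ^ (n - 1 - (2 * j + 1))
      ≤ ((n : ℝ) - 1) * x ^ (n - 2) * (24 / 19) := by
    calc ∑ j ∈ Finset.range (n / 2),
        ((n - 1).choose (2 * j + 1) : ℝ) * x ^ (n - 1 - (2 * j + 1))
        ≤ ∑ j ∈ Finset.range (n / 2), ((n : ℝ) - 1) * x ^ (n - 2) * (5 / 24) ^ j :=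
          Finset.sum_le_sum (fun j _ => key j)
      _ = ((n : ℝ) - 1) * x ^ (n - 2) * ∑ j ∈ Finset.range (n / 2), ((5 : ℝ) / 24) ^ j := by
          rw [Finset.mul_sum]
      _ ≤ ((n : ℝ) - 1) * x ^ (n - 2) * (24 / 19) := mul_le_mul_of_nonneg_left hsumgeom hA
  have hxn2 : (0 : ℝ) < x ^ (n - 2) := pow_pos hx0 _
  have hlt : ((n : ℝ) - 1) * x ^ (n - 2) * (24 / 19) < x ^ (n - 1) := by
    have hxn : ((n : ℝ) - 1) * (24 / 19) < x := by nlinarith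
    have hpow : x ^ (n - 1) = x ^ (n - 2) * x := by
      have : n - 1 = (n - 2) + 1 := by omega
      rw [this, pow_succ]
    rw [hpow]
    nlinarith
  have hextra : (0 : ℝ) ≤ ((n / 2 : ℕ) : ℝ) * (((n - 1) / 2 : ℕ) : ℝ) * x ^ (n - 3) := by
    positivity
  linarith
end

section
/- Consider the upper triangular half of an (n−2)×(n−2) grid (cells (r,c) with r + c ≤ n−1, say). If at least n−3 full rows and columns in total are colored black, then the number of black cells in the triangular region is at least (n²−4n+3)/4 if n is odd, and at least (n²−4n+4)/4 if n is even; consequently the number of uncolored cells is at most ⌊n/2⌋·⌊(n−1)/2⌋. -/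
/-!
Write `m = n - 2`, so that the region is the triangle `r + c ≤ m + 1` in `[1, m]²`, which has
`m (m + 1) / 2` cells. An uncolored cell lies in one of the `a = m - k₁` uncolored rows and one of
the `b = m - k₂` uncolored columns, so there are at most `a b` of them, and
`a + b = 2m - (k₁ + k₂) ≤ m + 1`. The integer AM–GM inequality then gives
`a b ≤ ⌈(m + 1)/2⌉ ⌊(m + 1)/2⌋ = ⌊n/2⌋ ⌊(n - 1)/2⌋`, and the black cells are the rest of the
triangle.
-/

open Finset

theorem Nat.mul_le_succ_div_two_mul_div_two {a b s : ℕ} (h : a + b ≤ s) :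
    a * b ≤ (s + 1) / 2 * (s / 2) := by
  have amgm : 4 * a * b ≤ s ^ 2 := (four_mul_le_sq_add a b).trans (Nat.pow_le_pow_left h 2)
  rcases Nat.even_or_odd' s with ⟨k, rfl | rfl⟩
  · rw [show (2 * k + 1) / 2 = k by omega, show 2 * k / 2 = k by omega]
    nlinarith
  · rw [show (2 * k + 1 + 1) / 2 = k + 1 by omega, show (2 * k + 1) / 2 = k by omega]
    nlinarith

theorem two_mul_sum_Icc_succ_sub (m : ℕ) :
    2 * ∑ r ∈ Icc 1 m, (m + 1 - r) = m * (m + 1) := by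
  have reflect : ∑ r ∈ Icc 1 m, (m + 1 - r) = ∑ r ∈ Icc 1 m, r :=
    sum_nbij' (m + 1 - ·) (m + 1 - ·) (by intro r; simp only [mem_Icc]; omega) (by intro r; simp only [mem_Icc]; omega)
      (by intro r; simp only [mem_Icc]; omega) (by intro r; simp only [mem_Icc]; omega) (fun _ _ => rfl)
  calc 2 * ∑ r ∈ Icc 1 m, (m + 1 - r)
      = ∑ r ∈ Icc 1 m, ((m + 1 - r) + r) := by rw [sum_add_distrib, ← reflect, two_mul]
    _ = ∑ r ∈ Icc 1 m, (m + 1) := sum_congr rfl fun r hr => by simp only [mem_Icc] at hr; omega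
    _ = m * (m + 1) := by simp

def triangle (m : ℕ) : Finset (ℕ × ℕ) :=
  (Icc 1 m ×ˢ Icc 1 m).filter (fun p => p.1 + p.2 ≤ m + 1)

theorem two_mul_card_triangle (m : ℕ) : 2 * #(triangle m) = m * (m + 1) := by
  have row (r : ℕ) (hr : r ∈ Icc 1 m) :
      (Icc 1 m).filter (fun c => r + c ≤ m + 1) = Icc 1 (m + 1 - r) := by
    ext c
    simp only [mem_filter, mem_Icc] at hr ⊢
    omega
  rw [triangle, card_filter, sum_product, ← two_mul_sum_Icc_succ_sub m]
  congr 1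
  refine sum_congr rfl fun r hr => ?_
  rw [← card_filter, row r hr, Nat.card_Icc, Nat.add_sub_cancel]

section Coloring

variable {α β : Type*} [DecidableEq α] [DecidableEq β]

theorem card_filter_colored_add_card_filter_uncolored (S : Finset (α × β)) (R : Finset α)
    (C : Finset β) (P : α × β → Prop) [DecidablePred P] :
    #(S.filter (fun p => P p ∧ (p.1 ∈ R ∨ p.2 ∈ C))) +
        #(S.filter (fun p => P p ∧ p.1 ∉ R ∧ p.2 ∉ C)) = #(S.filter P) := by
  rw [← card_filter_add_card_filter_not (s := S.filter P) (fun p => p.1 ∈ R ∨ p.2 ∈ C),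
    filter_filter, filter_filter]
  simp only [not_or]

theorem card_filter_uncolored_le (s R : Finset α) (t C : Finset β) (P : α × β → Prop)
    [DecidablePred P] :
    #((s ×ˢ t).filter (fun p => P p ∧ p.1 ∉ R ∧ p.2 ∉ C)) ≤ #(s \ R) * #(t \ C) := by
  rw [← card_product]
  refine card_le_card fun p hp => ?_
  simp only [mem_filter, mem_product, mem_sdiff] at hp ⊢
  exact ⟨⟨hp.1.1, hp.2.2.1⟩, hp.1.2, hp.2.2.2⟩

end Coloring

theorem colored_bounds_of_uncolored_le {m B U : ℕ} (hm : 1 ≤ m)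
    (hsplit : 2 * (B + U) = m * (m + 1)) (hU : U ≤ (m + 2) / 2 * ((m + 1) / 2)) :
    (Odd (m + 2) → (m + 2) ^ 2 + 3 ≤ 4 * B + 4 * (m + 2)) ∧
      (Even (m + 2) → (m + 2) ^ 2 + 4 ≤ 4 * B + 4 * (m + 2)) := by
  obtain ⟨k, rfl | rfl⟩ : ∃ k, m = 2 * k + 1 ∨ m = 2 * k + 2 := ⟨(m - 1) / 2, by omega⟩
  · refine ⟨fun _ => ?_, fun h => absurd h (by simp [Nat.even_iff])⟩
    rw [show (2 * k + 1 + 2) / 2 = k + 1 by omega, show (2 * k + 1 + 1) / 2 = k + 1 by omega] at hU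
    nlinarith
  · refine ⟨fun h => absurd h (by simp [Nat.odd_iff]), fun _ => ?_⟩
    rw [show (2 * k + 2 + 2) / 2 = k + 2 by omega, show (2 * k + 2 + 1) / 2 = k + 1 by omega] at hU
    nlinarith

theorem chessboard_black_cells (n : ℕ) (hn : 3 ≤ n)
    (R C : Finset ℕ) (hR : R ⊆ Finset.Icc 1 (n - 2)) (hC : C ⊆ Finset.Icc 1 (n - 2))
    (hcard : n - 3 ≤ R.card + C.card) :
    (Odd n →
        n ^ 2 + 3 ≤ 4 * (((Finset.Icc 1 (n - 2) ×ˢ Finset.Icc 1 (n - 2)).filter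
          (fun p => p.1 + p.2 ≤ n - 1 ∧ (p.1 ∈ R ∨ p.2 ∈ C))).card) + 4 * n) ∧
    (Even n →
        n ^ 2 + 4 ≤ 4 * (((Finset.Icc 1 (n - 2) ×ˢ Finset.Icc 1 (n - 2)).filter
          (fun p => p.1 + p.2 ≤ n - 1 ∧ (p.1 ∈ R ∨ p.2 ∈ C))).card) + 4 * n) ∧
    ((Finset.Icc 1 (n - 2) ×ˢ Finset.Icc 1 (n - 2)).filter
        (fun p => p.1 + p.2 ≤ n - 1 ∧ p.1 ∉ R ∧ p.2 ∉ C)).card ≤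
      (n / 2) * ((n - 1) / 2) := by
  obtain ⟨m, rfl⟩ : ∃ m, n = m + 2 := ⟨n - 2, by omega⟩
  simp only [Nat.add_sub_cancel, show m + 2 - 1 = m + 1 from rfl] at hR hC ⊢
  have hsplit := card_filter_colored_add_card_filter_uncolored (Icc 1 m ×ˢ Icc 1 m) R C
    (fun p => p.1 + p.2 ≤ m + 1)
  have huncolored := (card_filter_uncolored_le (Icc 1 m) R (Icc 1 m) C
    (fun p => p.1 + p.2 ≤ m + 1)).trans (Nat.mul_le_succ_div_two_mul_div_two (s := m + 1) (by
      rw [card_sdiff_of_subset hR, card_sdiff_of_subset hC, Nat.card_Icc]; omega))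
  have hcolored := colored_bounds_of_uncolored_le (by omega)
    (by rw [hsplit]; exact two_mul_card_triangle m) huncolored
  exact ⟨hcolored.1, hcolored.2, huncolored⟩
end
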